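/- If Y is an irreducible subset of Spec^L(M), then Ann_R(H(Y)) = ⋂_{K∈Y} Ann_R(soc(K)) is a prime ideal of R, where H(Y) = Σ_{K∈Y} soc(K). -/
import Mathlib


open Pointwise

section Defs
variable (R M : Type*) [CommRing R] [AddCommGroup M] [Module R M]

/-- A submodule `S` is second if `S ≠ 0` and for every `r : R`, `r • S = S` or `r • S = 0`. -/
def IsSecond (S : Submodule R M) : Prop :=
  S ≠ ⊥ ∧ ∀ r : R, r • S = S ∨ r • S = ⊥

/-- A submodule `K` is secondary if `K ≠ 0` and for every `r : R`,
`r • K = K` or `r ^ n • K = 0` for some `n ≥ 1`. -/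
def IsSecondary (K : Submodule R M) : Prop :=
  K ≠ ⊥ ∧ ∀ r : R, r • K = K ∨ ∃ n : ℕ, 0 < n ∧ r ^ n • K = ⊥

/-- The socle of a submodule `N`: the sum of all second submodules contained in `N`. -/
def soc (N : Submodule R M) : Submodule R M :=
  sSup {S : Submodule R M | IsSecond R M S ∧ S ≤ N}

/-- The secondary-like spectrum of `M`. -/
def SpecL : Set (Submodule R M) :=
  {K | IsSecondary R M K ∧ (soc R M K).annihilator = K.annihilator.radical}

/-- The variety `ν^s(N)`. -/
def nuS (N : Submodule R M) : Set (Submodule R M) :=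
  {K | K ∈ SpecL R M ∧ N.annihilator ≤ K.annihilator.radical}

/-- The variety `ν^{s*}(N)`. -/
def nuSStar (N : Submodule R M) : Set (Submodule R M) :=
  {K | K ∈ SpecL R M ∧ soc R M K ≤ N}

end Defs

section Top
variable (R M : Type*) [CommRing R] [AddCommGroup M] [Module R M]

/-- The variety `ν^s(N)` viewed inside `Spec^L(M)`. -/
def nuS' (N : Submodule R M) : Set (SpecL R M) :=
  {K | N.annihilator ≤ (K : Submodule R M).annihilator.radical}

/-- The Zariski (SL-) topology on `Spec^L(M)`, whose closed sets are the `ν^s(N)`. -/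
instance SLTopology : TopologicalSpace (SpecL R M) :=
  TopologicalSpace.generateFrom {U | ∃ N : Submodule R M, U = (nuS' R M N)ᶜ}

/-- The basic open set `E_r = Spec^L(M) \\ ν^s(Ann_M(r))`. -/
def Eopen (r : R) : Set (SpecL R M) :=
  (nuS' R M (Submodule.torsionBy R M r))ᶜ

end Top

variable {R M : Type*} [CommRing R] [AddCommGroup M] [Module R M]

lemma pointwise_smul_eq_bot_iff {r : R} {K : Submodule R M} :
    r • K = ⊥ ↔ r ∈ K.annihilator := by
  rw [Submodule.mem_annihilator, eq_bot_iff]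
  constructor
  · intro h x hx
    have := h (Submodule.smul_mem_pointwise_smul x r K hx)
    simpa using this
  · intro h y hy
    obtain ⟨x, hx, rfl⟩ := Set.mem_smul_set.mp hy
    simpa using h x hx

lemma pow_smul_eq_self {r : R} {K : Submodule R M} (h : r • K = K) (n : ℕ) :
    r ^ n • K = K := by
  induction n with
  | zero => simp
  | succ n ih => rw [pow_succ, mul_smul, h, ih]

lemma radical_ann_isPrime {K : Submodule R M} (hK : IsSecondary R M K) :
    K.annihilator.radical.IsPrime := by
  constructor
  · intro h
    rw [Ideal.radical_eq_top, Submodule.annihilator_eq_top_iff] at h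
    exact hK.1 h
  · intro a b hab
    by_contra hcon
    push_neg at hcon
    obtain ⟨ha, hb⟩ := hcon
    have haK : a • K = K := by
      rcases hK.2 a with h | ⟨n, hn, h⟩
      · exact h
      · exact absurd (Ideal.mem_radical_iff.mpr ⟨n, pointwise_smul_eq_bot_iff.mp h⟩) ha
    obtain ⟨n, hn⟩ := Ideal.mem_radical_iff.mp hab
    refine hb (Ideal.mem_radical_iff.mpr ⟨n, Submodule.mem_annihilator.mpr fun x hx => ?_⟩)
    rw [← pow_smul_eq_self haK n] at hx
    obtain ⟨y, hy, rfl⟩ := Set.mem_smul_set.mp hx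
    rw [smul_smul, ← mul_pow, mul_comm b a]
    exact Submodule.mem_annihilator.mp hn y hy

lemma nuS'_closed (N : Submodule R M) : IsClosed (nuS' R M N) := by
  rw [← isOpen_compl_iff]
  exact TopologicalSpace.isOpen_generateFrom_of_mem ⟨N, rfl⟩

lemma mem_ann_torsionBy (a : R) : a ∈ (Submodule.torsionBy R M a).annihilator :=
  Submodule.mem_annihilator.mpr fun x hx => hx

lemma mem_nuS'_torsionBy_iff {a : R} {K : SpecL R M} :
    K ∈ nuS' R M (Submodule.torsionBy R M a) ↔
      a ∈ (soc R M (K : Submodule R M)).annihilator := by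
  have hK2 : (soc R M (K : Submodule R M)).annihilator
      = (K : Submodule R M).annihilator.radical := K.2.2
  constructor
  · intro h
    rw [hK2]
    exact h (mem_ann_torsionBy a)
  · intro h
    intro r hr
    rw [← hK2]
    refine Submodule.annihilator_mono (fun x hx => ?_) hr
    exact Submodule.mem_annihilator.mp h x hx


theorem annihilator_H_isPrime_of_irreducible (Y : Set (SpecL R M))
    (hY : IsIrreducible Y) :
    (⨆ K ∈ Y, soc R M (K : Submodule R M)).annihilator =
      (⨅ K ∈ Y, (soc R M (K : Submodule R M)).annihilator) ∧
    (⨆ K ∈ Y, soc R M (K : Submodule R M)).annihilator.IsPrime := by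
  have heq : (⨆ K ∈ Y, soc R M (K : Submodule R M)).annihilator =
      (⨅ K ∈ Y, (soc R M (K : Submodule R M)).annihilator) := by
    rw [iSup_subtype', Submodule.annihilator_iSup, iInf_subtype']
  refine ⟨heq, ?_⟩
  rw [heq]
  obtain ⟨⟨K₀, hK₀⟩, hpre⟩ := hY
  constructor
  · intro htop
    have h1 : (⨅ K ∈ Y, (soc R M (K : Submodule R M)).annihilator)
        ≤ (soc R M (K₀ : Submodule R M)).annihilator := biInf_le _ hK₀
    rw [htop, top_le_iff, K₀.2.2, Ideal.radical_eq_top,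
      Submodule.annihilator_eq_top_iff] at h1
    exact K₀.2.1.1 h1
  · intro a b hab
    by_contra hcon
    push_neg at hcon
    obtain ⟨ha, hb⟩ := hcon
    simp only [Ideal.mem_iInf, Submodule.mem_iInf] at hab ha hb
    push_neg at ha hb
    obtain ⟨K₁, hK₁Y, hK₁⟩ := ha
    obtain ⟨K₂, hK₂Y, hK₂⟩ := hb
    have hsub : Y ⊆ nuS' R M (Submodule.torsionBy R M a)
        ∪ nuS' R M (Submodule.torsionBy R M b) := by
      intro K hK
      have hprime : (soc R M (K : Submodule R M)).annihilator.IsPrime := by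
        rw [K.2.2]; exact radical_ann_isPrime K.2.1
      rcases hprime.mem_or_mem (hab K hK) with h | h
      · exact Or.inl (mem_nuS'_torsionBy_iff.mpr h)
      · exact Or.inr (mem_nuS'_torsionBy_iff.mpr h)
    rcases isPreirreducible_iff_isClosed_union_isClosed.mp hpre _ _
        (nuS'_closed _) (nuS'_closed _) hsub with h | h
    · exact hK₁ (mem_nuS'_torsionBy_iff.mp (h hK₁Y))
    · exact hK₂ (mem_nuS'_torsionBy_iff.mp (h hK₂Y))
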